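/- Let g be a Lie algebra and h ⊆ g an ideal with lower central series h^(1) := h, h^(i+1) := [h^(i), h]. For i ≥ 1, let P_i : g → g/h^(i+1), P_{i−1} : g → g/h^(i), and P_0 : g → g/h be the canonical projections, with linear right-inverses ι_{i−1} and ι_0 of P_{i−1} and P_0 respectively. Then for every word ω of length |ω| ≥ 2 with letters Y_1,…,Y_{|ω|} ∈ g, P_i(ω) equals P_i of the word with ι_{i−1}∘P_{i−1} applied to every letter, plus the sum over j = 1,…,|ω| of P_i of the word whose j-th letter is (Id_g − ι_{i−1}∘P_{i−1})Y_j and whose other letters are ι_0(P_0 Y_ℓ), ℓ ≠ j. -/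

import Mathlib

/-! Put `f = ι_{i-1} ∘ P_{i-1}` and `g₀ = ι₀ ∘ P₀`, so that `Y - f Y ∈ h^(i)` and `Y - g₀ Y ∈ h`.
The defect `ω - ω^f - Σⱼ ωⱼ` lies in `[h^(i), h] = h^(i+1)`, by induction on the word: for
`ω = [y, ω₁]` it equals
`[y - f y, ω₁ - ω₁^{g₀}] + [f y - g₀ y, ω₁ - ω₁^f] + [g₀ y, defect of ω₁]`,
and each bracket lies in `[h^(i), h]`, since replacing every letter of a word by one congruent
to it modulo an ideal changes the word only modulo that ideal. -/

/-- `lcsI h i` is the `(i+1)`-st term `h^(i+1)` of the lower central series of the ideal `h`: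
`h^(1) = h`, `h^(i+1) = [h^(i), h]`. -/
def lcsI {g : Type*} [LieRing g] [LieAlgebra ℝ g] (h : LieIdeal ℝ g) : ℕ → LieIdeal ℝ g
  | 0 => h
  | i + 1 => ⁅lcsI h i, h⁆

/-- Right-nested Lie bracket `[Y₁, [Y₂, [… , Y_m]⋯]]` of a list of elements. -/
def wordEvalL {g : Type*} [LieRing g] : List g → g
  | [] => 0
  | [y] => y
  | y :: z :: l => ⁅y, wordEvalL (z :: l)⁆

namespace List

theorem mapIdx_const {α β : Type*} (f : α → β) (l : List α) :
    (l.mapIdx fun _ y => f y) = l.map f := by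
  induction l with
  | nil => rfl
  | cons y l ih => simp [mapIdx_cons, ih]

end List

section Words

variable {R g : Type*} [CommRing R] [LieRing g] [LieAlgebra R g]

theorem wordEvalL_cons_of_ne_nil (y : g) {l : List g} (hl : l ≠ []) :
    wordEvalL (y :: l) = ⁅y, wordEvalL l⁆ := by
  cases l with
  | nil => exact absurd rfl hl
  | cons z l => rfl

theorem wordEvalL_map_sub_map_mem (I : LieIdeal R g) {φ ψ : g → g}
    (hφψ : ∀ y, φ y - ψ y ∈ I) (l : List g) :
    wordEvalL (l.map φ) - wordEvalL (l.map ψ) ∈ I := by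
  induction l with
  | nil => simp [wordEvalL]
  | cons y l ih =>
    rcases eq_or_ne l [] with rfl | hl
    · simpa [wordEvalL] using hφψ y
    have hmap : ∀ χ : g → g, wordEvalL ((y :: l).map χ) = ⁅χ y, wordEvalL (l.map χ)⁆ :=
      fun χ => wordEvalL_cons_of_ne_nil _ (by simpa using hl)
    rw [hmap, hmap, ← sub_add_sub_cancel _ ⁅ψ y, wordEvalL (l.map φ)⁆, ← sub_lie, ← lie_sub]
    exact add_mem (lie_mem_left R g I _ _ (hφψ y)) (I.lie_mem ih)

theorem sum_wordEvalL_mapIdx_cons (a b : g → g) (y : g) {l : List g} (hl : l ≠ []) :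
    ∑ j ∈ Finset.range (y :: l).length,
        wordEvalL ((y :: l).mapIdx fun t x => if t = j then a x else b x) =
      ⁅a y, wordEvalL (l.map b)⁆ +
        ⁅b y, ∑ j ∈ Finset.range l.length,
          wordEvalL (l.mapIdx fun t x => if t = j then a x else b x)⁆ := by
  have hne : ∀ j, (l.mapIdx fun t x => if t = j then a x else b x) ≠ [] := fun j => by
    simpa using hl
  rw [List.length_cons, Finset.sum_range_succ', add_comm, lie_sum]
  congr 1
  · simp only [List.mapIdx_cons, if_pos, Nat.add_one_ne_zero, if_false, List.mapIdx_const]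
    exact wordEvalL_cons_of_ne_nil _ (by simpa using hl)
  · refine Finset.sum_congr rfl fun j _ => ?_
    simp only [List.mapIdx_cons, add_left_inj]
    exact wordEvalL_cons_of_ne_nil _ (hne j)

theorem wordEvalL_sub_map_sub_sum_mem_lie {I H : LieIdeal R g} (hIH : I ≤ H) {f g₀ : g → g}
    (hf : ∀ y, y - f y ∈ I) (hg₀ : ∀ y, y - g₀ y ∈ H) {l : List g} (hl : l ≠ []) :
    wordEvalL l - wordEvalL (l.map f) -
        ∑ j ∈ Finset.range l.length,
          wordEvalL (l.mapIdx fun t y => if t = j then y - f y else g₀ y) ∈ ⁅I, H⁆ := by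
  induction l with
  | nil => exact absurd rfl hl
  | cons y l ih =>
    rcases eq_or_ne l [] with rfl | hl₁
    · simp [wordEvalL]
    have hfg₀ : f y - g₀ y ∈ H := by
      simpa using sub_mem (hg₀ y) (hIH (hf y))
    have hg₀_word : wordEvalL l - wordEvalL (l.map g₀) ∈ H := by
      simpa using wordEvalL_map_sub_map_mem H hg₀ l
    have hf_word : wordEvalL l - wordEvalL (l.map f) ∈ I := by
      simpa using wordEvalL_map_sub_map_mem I hf l
    rw [sum_wordEvalL_mapIdx_cons _ _ _ hl₁, wordEvalL_cons_of_ne_nil _ hl₁, List.map_cons,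
      wordEvalL_cons_of_ne_nil _ (by simpa using hl₁)]
    set A := wordEvalL l
    set B := wordEvalL (l.map f)
    set C := ∑ j ∈ Finset.range l.length,
      wordEvalL (l.mapIdx fun t x => if t = j then x - f x else g₀ x)
    have hexpand : ⁅y, A⁆ - ⁅f y, B⁆ - (⁅y - f y, wordEvalL (l.map g₀)⁆ + ⁅g₀ y, C⁆) =
        ⁅y - f y, A - wordEvalL (l.map g₀)⁆ + ⁅f y - g₀ y, A - B⁆ + ⁅g₀ y, A - B - C⁆ := by
      simp only [sub_lie, lie_sub]
      abel
    rw [hexpand]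
    refine add_mem (add_mem ?_ ?_) ?_
    · exact LieSubmodule.lie_mem_lie (hf y) hg₀_word
    · rw [← lie_skew]
      exact neg_mem (LieSubmodule.lie_mem_lie hf_word hfg₀)
    · exact LieSubmodule.lie_mem _ (ih hl₁)

end Words

theorem Submodule.sub_mem_of_mkQ_comp_eq_id {R M : Type*} [Ring R] [AddCommGroup M] [Module R M]
    {N : Submodule R M} {ι : (M ⧸ N) →ₗ[R] M} (hι : N.mkQ.comp ι = LinearMap.id) (y : M) :
    y - ι (N.mkQ y) ∈ N :=
  (Submodule.Quotient.eq N).mp (LinearMap.congr_fun hι (N.mkQ y)).symm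

theorem lcsI_le {g : Type*} [LieRing g] [LieAlgebra ℝ g] (h : LieIdeal ℝ g) :
    ∀ k, lcsI h k ≤ h
  | 0 => le_rfl
  | k + 1 => LieSubmodule.lie_le_right h (lcsI h k)

/-- Let `h` be an ideal of a Lie algebra `g` with lower central series
`h^(i)` (here `lcsI h i = h^(i+1)`). For `i ≥ 1`, with canonical projections
`P_i : g → g/h^(i+1)`, `P_{i−1} : g → g/h^(i)`, `P_0 : g → g/h` and linear right-inverses
`ι₁` of `P_{i−1}` and `ι₀` of `P_0`, every word with letters `Y₁, …, Y_{|ω|}` (`|ω| ≥ 2`)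
satisfies: `P_i ω` equals `P_i` of the word with `ι₁ ∘ P_{i−1}` applied to every letter, plus
the sum over `j` of `P_i` of the word whose `j`-th letter is `(Id − ι₁ ∘ P_{i−1}) Y_j` and
whose other letters are `ι₀ (P_0 Y_ℓ)`. -/
theorem statement15
    {g : Type*} [LieRing g] [LieAlgebra ℝ g]
    (h : LieIdeal ℝ g)
    (i : ℕ) (hi : 1 ≤ i)
    (ι₁ : (g ⧸ LieSubmodule.toSubmodule (lcsI h (i - 1))) →ₗ[ℝ] g)
    (hι₁ : (LieSubmodule.toSubmodule (lcsI h (i - 1))).mkQ.comp ι₁ = LinearMap.id)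
    (ι₀ : (g ⧸ LieSubmodule.toSubmodule (lcsI h 0)) →ₗ[ℝ] g)
    (hι₀ : (LieSubmodule.toSubmodule (lcsI h 0)).mkQ.comp ι₀ = LinearMap.id) :
    ∀ l : List g, 2 ≤ l.length →
      (LieSubmodule.toSubmodule (lcsI h i)).mkQ (wordEvalL l) =
      (LieSubmodule.toSubmodule (lcsI h i)).mkQ
        (wordEvalL (l.map fun y =>
          ι₁ ((LieSubmodule.toSubmodule (lcsI h (i - 1))).mkQ y))) +
      ∑ j ∈ Finset.range l.length,
        (LieSubmodule.toSubmodule (lcsI h i)).mkQ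
          (wordEvalL (l.mapIdx fun t y =>
            if t = j then y - ι₁ ((LieSubmodule.toSubmodule (lcsI h (i - 1))).mkQ y)
            else ι₀ ((LieSubmodule.toSubmodule (lcsI h 0)).mkQ y))) := by
  obtain ⟨k, rfl⟩ : ∃ k, i = k + 1 := ⟨i - 1, (Nat.sub_add_cancel hi).symm⟩
  intro l hl
  have hne : l ≠ [] := by rintro rfl; simp at hl
  have hmem := wordEvalL_sub_map_sub_sum_mem_lie (lcsI_le h k)
    (Submodule.sub_mem_of_mkQ_comp_eq_id hι₁) (Submodule.sub_mem_of_mkQ_comp_eq_id hι₀) hne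
  rw [sub_sub, ← LieSubmodule.mem_toSubmodule] at hmem
  rw [← map_sum, ← map_add, Submodule.mkQ_apply, Submodule.mkQ_apply]
  exact (Submodule.Quotient.eq _).mpr hmem
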